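/- arXiv:2602.14600 — 2 statements merged into one kernel-verified Lean document; each statement's English description precedes it below -/
import Mathlib

section
/- Let R be a ring. If a ∈ √Δ(R) is central (a ∈ C(R)), then a ∈ Δ(R). -/
/-- Δ(R) = {x : 1 - x*u is a unit for every unit u}. -/
def Delta (R : Type*) [Ring R] : Set R :=
  {x | ∀ u : R, IsUnit u → IsUnit (1 - x * u)}

/-- √Δ(R) = {x : x^n ∈ Δ(R) for some n ≥ 1}. -/
def sqrtDelta (R : Type*) [Ring R] : Set R :=
  {x | ∃ n : ℕ, 1 ≤ n ∧ x ^ n ∈ Delta R}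

/-- `1 - x` and the geometric sum `∑ xⁱ` commute and multiply to `1 - xⁿ`, so a unit `1 - xⁿ`
forces both factors to be units. -/
theorem isUnit_one_sub_of_isUnit_one_sub_pow {R : Type*} [Ring R] {x : R} (n : ℕ)
    (h : IsUnit (1 - x ^ n)) : IsUnit (1 - x) := by
  have hcomm : Commute (1 - x) (∑ i ∈ Finset.range n, x ^ i) :=
    (mul_neg_geom_sum x n).trans (geom_sum_mul_neg x n).symm
  rw [← mul_neg_geom_sum x n, hcomm.isUnit_mul_iff] at h
  exact h.1

theorem stmt_2 {R : Type*} [Ring R] (a : R) (ha : a ∈ sqrtDelta R)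
    (hc : ∀ r : R, a * r = r * a) : a ∈ Delta R := by
  obtain ⟨n, -, hΔ⟩ := ha
  intro u hu
  apply isUnit_one_sub_of_isUnit_one_sub_pow n
  rw [Commute.mul_pow (hc u)]
  exact hΔ (u ^ n) (hu.pow n)
end

section
/- Every U√Δ-ring R has no non-trivial central idempotents: if e is a central idempotent of R, then e = 0 or e = 1. -/
/-- R is a U√Δ-ring if every non-unit is a product of a unit and an element of √Δ(R). -/
def IsUSqrtDeltaRing (R : Type*) [Ring R] : Prop :=
  ∀ a : R, ¬ IsUnit a → ∃ u b : R, IsUnit u ∧ b ∈ sqrtDelta R ∧ a = u * b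

theorem IsIdempotentElem.eq_zero_of_isUnit_one_sub {R : Type*} [Ring R] {e : R}
    (he : IsIdempotentElem e) (h : IsUnit (1 - e)) : e = 0 :=
  sub_eq_self.mp ((IsIdempotentElem.iff_eq_one_of_isUnit h).mp he.one_sub)

theorem isUnit_one_sub_of_eq_units_mul_mem_sqrtDelta {R : Type*} [Ring R] {e b : R} {u : Rˣ}
    (he : IsIdempotentElem e) (hcomm : Commute e u) (hb : b ∈ sqrtDelta R) (heub : e = u * b) :
    IsUnit (1 - e) := by
  obtain ⟨n, hn, hΔ⟩ := hb
  have hb_eq : b = ↑u⁻¹ * e := by rw [heub, Units.inv_mul_cancel_left]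
  have hcomm_n : Commute e ↑(u ^ n) := by
    simpa only [Units.val_pow_eq_pow_val] using hcomm.pow_right n
  have hbn : b ^ n * ↑(u ^ n) = e := by
    rw [hb_eq, hcomm.units_inv_right.symm.mul_pow, he.pow_eq (by omega), ← Units.val_pow_eq_pow_val,
      inv_pow, mul_assoc, hcomm_n.eq, Units.inv_mul_cancel_left]
  simpa only [hbn] using hΔ _ (u ^ n).isUnit

theorem stmt_12 {R : Type*} [Ring R] (hR : IsUSqrtDeltaRing R) (e : R)
    (he : e * e = e) (hc : ∀ r : R, e * r = r * e) : e = 0 ∨ e = 1 := by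
  by_cases hunit : IsUnit e
  · exact Or.inr ((IsIdempotentElem.iff_eq_one_of_isUnit hunit).mp he)
  · obtain ⟨_, b, ⟨u, rfl⟩, hb, heub⟩ := hR e hunit
    exact Or.inl (IsIdempotentElem.eq_zero_of_isUnit_one_sub he
      (isUnit_one_sub_of_eq_units_mul_mem_sqrtDelta he (hc u) hb heub))
end
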